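/- Let A, B ⊂ ℝ^d be disjoint finite sets such that A is high above B. If P ⊆ A ∪ B is a convex cup or a convex cap, then either P \ ∂_π P ⊆ A or P \ ∂_π P ⊆ B. -/

import Mathlib

/-!
Suppose `x ∈ B` and `y ∈ A` both project into the interior of `conv π(P)`, and say `P` is a cup.
A Carathéodory argument that keeps `x` as a vertex, together with general position, writes
`π(y) = ∑ cᵢ π(qᵢ)` with `0 < cᵢ < 1` for `d` points `qᵢ ∈ P` one of which is `x`; the cup
inequality gives `h(y) < ∑ cᵢ h(qᵢ)`. On the other hand, splitting the affine dependence
`π(y) - ∑ cᵢ π(qᵢ) = 0` into its `A`-part (which contains `y`) and its `B`-part (which contains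
`x`) produces points `s ∈ aff S`, `t ∈ aff T` of a generic pair with `π(s) = π(t)`, and
`h(s) - h(t)` is a positive multiple of `h(y) - ∑ cᵢ h(qᵢ)`. Since `A` is high above `B` this is
positive, a contradiction. For a cap the roles of `x` and `y` are exchanged.
-/

open scoped BigOperators ENNReal

noncomputable section

/-- The projection `π : ℝ^d → ℝ^{d−1}` forgetting the last coordinate. -/
def proj {d : ℕ} (x : EuclideanSpace ℝ (Fin d)) : EuclideanSpace ℝ (Fin (d - 1)) :=
  WithLp.toLp 2 (fun i => x (Fin.castLE (Nat.sub_le d 1) i))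

/-- The height `h(x) = x_d`, the last coordinate of `x ∈ ℝ^d` (junk value `0` for `d = 0`). -/
def hCoord {d : ℕ} (x : EuclideanSpace ℝ (Fin d)) : ℝ :=
  if h : 0 < d then x ⟨d - 1, by omega⟩ else 0

/-- The first coordinate of `x ∈ ℝ^d` (junk value `0` for `d = 0`). -/
def firstCoord {d : ℕ} (x : EuclideanSpace ℝ (Fin d)) : ℝ :=
  if h : 0 < d then x ⟨0, h⟩ else 0

/-- A set `Q ⊆ ℝ^m` is in affinely general position if any `m+1` of its points are
affinely independent. -/
def AffGenPos {m : ℕ} (Q : Set (EuclideanSpace ℝ (Fin m))) : Prop :=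
  ∀ s : Finset (EuclideanSpace ℝ (Fin m)), ↑s ⊆ Q → s.card = m + 1 →
    AffineIndependent ℝ (fun x : s => (x : EuclideanSpace ℝ (Fin m)))

/-- A set `Q ⊆ ℝ^d` is convex independent if it is in general position and no point of `Q`
lies in the convex hull of the other points of `Q`. -/
def ConvIndep {d : ℕ} (Q : Set (EuclideanSpace ℝ (Fin d))) : Prop :=
  AffGenPos Q ∧ ∀ q ∈ Q, q ∉ convexHull ℝ (Q \ {q})

/-- A finite set `P ⊆ ℝ^d` is regular if (R1) the projection of `P` to each coordinate axis is
injective; (R2) `π(P)` is in affinely general position in `ℝ^{d−1}`; (R3) for every generic pair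
`(S, T)` of `P` (disjoint nonempty subsets with `|S| + |T| = d + 1`), the affine spans of `π(S)`
and `π(T)` intersect in exactly one point. -/
def Regular {d : ℕ} (P : Set (EuclideanSpace ℝ (Fin d))) : Prop :=
  (∀ i : Fin d, Set.InjOn (fun p : EuclideanSpace ℝ (Fin d) => p i) P) ∧
  AffGenPos (proj '' P) ∧
  (∀ S T : Finset (EuclideanSpace ℝ (Fin d)), ↑S ⊆ P → ↑T ⊆ P → Disjoint S T →
    S.Nonempty → T.Nonempty → S.card + T.card = d + 1 →
    ∃! q : EuclideanSpace ℝ (Fin (d - 1)),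
      q ∈ affineSpan ℝ (proj '' (S : Set (EuclideanSpace ℝ (Fin d)))) ∧
      q ∈ affineSpan ℝ (proj '' (T : Set (EuclideanSpace ℝ (Fin d)))))

/-- `A` is high above `B` if `A`, `B` are disjoint, `A ∪ B` is regular, and for every generic pair
`(S, T)` of `A ∪ B` with `S ⊆ A`, `T ⊆ B`, the points `s ∈ aff S`, `t ∈ aff T` with
`π(s) = π(t)` satisfy `h(s) > h(t)`. -/
def HighAbove {d : ℕ} (A B : Set (EuclideanSpace ℝ (Fin d))) : Prop :=
  Disjoint A B ∧ Regular (A ∪ B) ∧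
  ∀ S T : Finset (EuclideanSpace ℝ (Fin d)), ↑S ⊆ A → ↑T ⊆ B →
    S.Nonempty → T.Nonempty → S.card + T.card = d + 1 →
    ∀ s t : EuclideanSpace ℝ (Fin d),
      s ∈ affineSpan ℝ (S : Set (EuclideanSpace ℝ (Fin d))) →
      t ∈ affineSpan ℝ (T : Set (EuclideanSpace ℝ (Fin d))) →
      proj s = proj t → hCoord t < hCoord s

/-- A regular set `P ⊆ ℝ^d` is a convex cup if whenever `p, p₁, …, p_d ∈ P` are distinct points
with `π(p) = ∑ cᵢ π(pᵢ)`, all `cᵢ ∈ (0,1)` and `∑ cᵢ = 1`, then `h(p) < ∑ cᵢ h(pᵢ)`. -/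
def ConvexCup {d : ℕ} (P : Set (EuclideanSpace ℝ (Fin d))) : Prop :=
  Regular P ∧
  ∀ (p : EuclideanSpace ℝ (Fin d)) (q : Fin d → EuclideanSpace ℝ (Fin d)) (c : Fin d → ℝ),
    p ∈ P → (∀ i, q i ∈ P) → Function.Injective q → (∀ i, p ≠ q i) →
    (∀ i, c i ∈ Set.Ioo (0 : ℝ) 1) → ∑ i, c i = 1 →
    proj p = ∑ i, c i • proj (q i) →
    hCoord p < ∑ i, c i * hCoord (q i)

/-- A regular set `P ⊆ ℝ^d` is a convex cap if whenever `p, p₁, …, p_d ∈ P` are distinct points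
with `π(p) = ∑ cᵢ π(pᵢ)`, all `cᵢ ∈ (0,1)` and `∑ cᵢ = 1`, then `h(p) > ∑ cᵢ h(pᵢ)`. -/
def ConvexCap {d : ℕ} (P : Set (EuclideanSpace ℝ (Fin d))) : Prop :=
  Regular P ∧
  ∀ (p : EuclideanSpace ℝ (Fin d)) (q : Fin d → EuclideanSpace ℝ (Fin d)) (c : Fin d → ℝ),
    p ∈ P → (∀ i, q i ∈ P) → Function.Injective q → (∀ i, p ≠ q i) →
    (∀ i, c i ∈ Set.Ioo (0 : ℝ) 1) → ∑ i, c i = 1 →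
    proj p = ∑ i, c i • proj (q i) →
    ∑ i, c i * hCoord (q i) < hCoord p

/-- `∂_π P`, the set of points of `P` whose projection does not lie in the interior of the
convex hull of `π(P)`. -/
def piBoundary {d : ℕ} (P : Set (EuclideanSpace ℝ (Fin d))) : Set (EuclideanSpace ℝ (Fin d)) :=
  {p ∈ P | proj p ∉ interior (convexHull ℝ (proj '' P))}

/-- The rank of `p` in `P`: the number of points of `P` whose first coordinate is at most that
of `p`.  If `P` is sorted as `p₁, p₂, …` by strictly increasing first coordinate, then
`rank P pₜ = t`. -/
def rank {d : ℕ} (P : Set (EuclideanSpace ℝ (Fin d))) (p : EuclideanSpace ℝ (Fin d)) : ℕ :=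
  Set.ncard {q ∈ P | firstCoord q ≤ firstCoord p}

/-- The subset `P_{a,b} = {p_t ∈ P : t ≡ a (mod b)}` of `P` (sorted by first coordinate). -/
def modClass {d : ℕ} (a b : ℕ) (P : Set (EuclideanSpace ℝ (Fin d))) :
    Set (EuclideanSpace ℝ (Fin d)) :=
  {p ∈ P | rank P p % b = a % b}

/-- `d`-oscillators, defined recursively: (O1) any one-point set, and any finite subset of `ℝ¹`,
is an oscillator; (O2) for `d ≥ 2` a finite set `P` with `|P| ≥ 2` is a `d`-oscillator if it is
regular, both `P_{1,2}` and `P_{2,2}` are `d`-oscillators, one of `P_{1,2}`, `P_{2,2}` is high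
above the other, and `π(P)` is a `(d−1)`-oscillator. -/
inductive IsOscillator : (d : ℕ) → Set (EuclideanSpace ℝ (Fin d)) → Prop
  | single {d : ℕ} (p : EuclideanSpace ℝ (Fin d)) : IsOscillator d {p}
  | dimOne (P : Set (EuclideanSpace ℝ (Fin 1))) (hfin : P.Finite) : IsOscillator 1 P
  | step {d : ℕ} (P : Set (EuclideanSpace ℝ (Fin d))) (hd : 2 ≤ d) (hfin : P.Finite)
      (hcard : 2 ≤ P.ncard) (hreg : Regular P)
      (h1 : IsOscillator d (modClass 1 2 P))
      (h2 : IsOscillator d (modClass 2 2 P))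
      (hab : HighAbove (modClass 1 2 P) (modClass 2 2 P) ∨
        HighAbove (modClass 2 2 P) (modClass 1 2 P))
      (hproj : IsOscillator (d - 1) (proj '' P)) : IsOscillator d P

/-- A finite set `P ⊆ ℝ^d` is generic if for any disjoint nonempty subsets `S, T` of `P` with
`|S| + |T| = d + 2`, the affine spans of `S` and `T` intersect in exactly one point. -/
def GenericSet {d : ℕ} (P : Set (EuclideanSpace ℝ (Fin d))) : Prop :=
  ∀ S T : Finset (EuclideanSpace ℝ (Fin d)), ↑S ⊆ P → ↑T ⊆ P → Disjoint S T →
    S.Nonempty → T.Nonempty → S.card + T.card = d + 2 →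
    ∃! x : EuclideanSpace ℝ (Fin d),
      x ∈ affineSpan ℝ (S : Set (EuclideanSpace ℝ (Fin d))) ∧
      x ∈ affineSpan ℝ (T : Set (EuclideanSpace ℝ (Fin d)))

/-- The point of `ℝ^d` obtained from `y ∈ ℝ^{d−1}` by appending a last coordinate `t`. -/
def lift {d : ℕ} (y : EuclideanSpace ℝ (Fin (d - 1))) (t : ℝ) : EuclideanSpace ℝ (Fin d) :=
  WithLp.toLp 2 (fun i => if h : (i : ℕ) < d - 1 then y ⟨i, h⟩ else t)

/-- `(N)_ε = ∑_{k≥0} a_k ε^{k+1}` where `N = ∑_{k≥0} a_k 2^k` is the binary expansion of `N`. -/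
def binRep (ε : ℝ) (N : ℕ) : ℝ :=
  ∑ k ∈ Finset.range (N + 1), if N.testBit k then ε ^ (k + 1) else 0

/-- The stretch `str_P(C) = i_k − i_1` of a subset `C` of a `d`-oscillator `P` (sorted by first
coordinate), where `i_1 < … < i_k` are the indices of the elements of `C` in `P`. -/
def stretch {d : ℕ} (P C : Set (EuclideanSpace ℝ (Fin d))) : ℕ :=
  sSup (rank P '' C) - sInf (rank P '' C)

/-- `Δ_d(k)`: the minimum stretch `str_P(C)` over all finite `d`-oscillators `P` and all
`k`-point convex independent subsets `C ⊆ P` (`= ∞` if there are none). -/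
def Delta (d k : ℕ) : ℝ≥0∞ :=
  sInf {s : ℝ≥0∞ | ∃ P C : Set (EuclideanSpace ℝ (Fin d)),
    IsOscillator d P ∧ C ⊆ P ∧ ConvIndep C ∧ C.ncard = k ∧ s = (stretch P C : ℝ≥0∞)}

/-- `Δ'_d(k)`: the minimum stretch `str_P(C)` over all finite `d`-oscillators `P` and all
`k`-point subsets `C ⊆ P` that are convex cups or convex caps (`= ∞` if there are none). -/
def Delta' (d k : ℕ) : ℝ≥0∞ :=
  sInf {s : ℝ≥0∞ | ∃ P C : Set (EuclideanSpace ℝ (Fin d)),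
    IsOscillator d P ∧ C ⊆ P ∧ (ConvexCup C ∨ ConvexCap C) ∧ C.ncard = k ∧
      s = (stretch P C : ℝ≥0∞)}

open Finset

section Linear

variable {d : ℕ}

def projLinearMap (d : ℕ) : EuclideanSpace ℝ (Fin d) →ₗ[ℝ] EuclideanSpace ℝ (Fin (d - 1)) where
  toFun := proj
  map_add' _ _ := rfl
  map_smul' _ _ := rfl

def hCoordLinearMap (d : ℕ) : EuclideanSpace ℝ (Fin d) →ₗ[ℝ] ℝ where
  toFun := hCoord
  map_add' x y := by unfold hCoord; split_ifs <;> simp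
  map_smul' c x := by unfold hCoord; split_ifs <;> simp

lemma projLinearMap_apply (x : EuclideanSpace ℝ (Fin d)) : projLinearMap d x = proj x :=
  rfl

lemma hCoordLinearMap_apply (x : EuclideanSpace ℝ (Fin d)) :
    hCoordLinearMap d x = hCoord x :=
  rfl

lemma proj_injOn (hd : 2 ≤ d) {P : Set (EuclideanSpace ℝ (Fin d))} (hP : Regular P) :
    Set.InjOn proj P := fun x hx y hy hxy =>
  hP.1 ⟨0, by omega⟩ hx hy (congrArg (· ⟨0, by omega⟩) hxy)

end Linear

section AffineCombination

variable {V ι : Type*} [AddCommGroup V] [Module ℝ V]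

lemma sum_smul_mem_affineSpan_image (s : Finset ι) (r : ι → V) {w : ι → ℝ}
    (hw : ∑ i ∈ s, w i = 1) : ∑ i ∈ s, w i • r i ∈ affineSpan ℝ (r '' s) := by
  rw [← s.affineCombination_eq_linear_combination r w hw]
  exact affineCombination_mem_affineSpan_image hw (fun i hi h => absurd hi h) r

lemma exists_sub_eq_smul_sum_of_sum_eq_zero (s : Finset ι) (r : ι → V) {w : ι → ℝ}
    (hw : ∑ i ∈ s, w i = 0) (p : ι → Prop) [DecidablePred p]
    (hγ : ∑ i ∈ s with p i, w i ≠ 0) :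
    ∃ x ∈ affineSpan ℝ (r '' ↑(s.filter p)), ∃ y ∈ affineSpan ℝ (r '' ↑(s.filter (¬ p ·))),
      x - y = (∑ i ∈ s with p i, w i)⁻¹ • ∑ i ∈ s, w i • r i := by
  set γ := ∑ i ∈ s with p i, w i
  have hcompl : ∑ i ∈ s with ¬ p i, w i = -γ := by
    rw [eq_neg_iff_add_eq_zero, add_comm, sum_filter_add_sum_filter_not, hw]
  refine ⟨∑ i ∈ s with p i, (γ⁻¹ * w i) • r i, sum_smul_mem_affineSpan_image _ r ?_,
    ∑ i ∈ s with ¬ p i, (-γ⁻¹ * w i) • r i, sum_smul_mem_affineSpan_image _ r ?_, ?_⟩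
  · rw [← mul_sum, inv_mul_cancel₀ hγ]
  · rw [← mul_sum, hcompl, neg_mul_neg, inv_mul_cancel₀ hγ]
  · simp only [mul_smul, neg_smul, ← smul_sum, sum_neg_distrib, sub_neg_eq_add, ← smul_add,
      sum_filter_add_sum_filter_not]

end AffineCombination

section HighAbove

variable {d : ℕ} {A B : Set (EuclideanSpace ℝ (Fin d))}

open Classical in
lemma HighAbove.mul_sum_hCoord_pos (hAB : HighAbove A B) {ι : Type*} [Fintype ι]
    (hι : Fintype.card ι = d + 1) {r : ι → EuclideanSpace ℝ (Fin d)} (hr : Function.Injective r)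
    (hrAB : ∀ i, r i ∈ A ∪ B) {w : ι → ℝ} (hw : ∑ i, w i = 0)
    (hwr : ∑ i, w i • proj (r i) = 0) (hγ : ∑ i with r i ∈ A, w i ≠ 0) :
    0 < (∑ i with r i ∈ A, w i) * ∑ i, w i * hCoord (r i) := by
  set γ := ∑ i with r i ∈ A, w i
  obtain ⟨x, hx, y, hy, hxy⟩ := exists_sub_eq_smul_sum_of_sum_eq_zero univ r hw (r · ∈ A) hγ
  have hI : (univ.filter (r · ∈ A)).Nonempty := nonempty_of_sum_ne_zero hγ
  have hJ : (univ.filter (r · ∉ A)).Nonempty := by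
    refine nonempty_of_sum_ne_zero (f := w) fun h => hγ ?_
    rw [← hw, ← sum_filter_add_sum_filter_not univ (r · ∈ A), h, add_zero]
  have hcard : ((univ.filter (r · ∈ A)).image r).card + ((univ.filter (r · ∉ A)).image r).card
      = d + 1 := by
    rw [card_image_of_injective _ hr, card_image_of_injective _ hr,
      card_filter_add_card_filter_not, card_univ, hι]
  have hA : ↑((univ.filter (r · ∈ A)).image r) ⊆ A := by
    simp [Set.subset_def]
  have hB : ↑((univ.filter (r · ∉ A)).image r) ⊆ B := by
    simp only [coe_image, coe_filter, Set.image_subset_iff]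
    exact fun i hi => (hrAB i).resolve_left (by simpa using hi)
  have hproj : proj x = proj y := by
    simpa only [map_sub, map_smul, map_sum, projLinearMap_apply, hwr, smul_zero, sub_eq_zero]
      using congrArg (projLinearMap d) hxy
  have hlt := hAB.2.2 _ _ hA hB (hI.image r) (hJ.image r) hcard x y
    (by rwa [coe_image]) (by rwa [coe_image]) hproj
  have hh : hCoord x - hCoord y = γ⁻¹ * ∑ i, w i * hCoord (r i) := by
    simpa only [map_sub, map_smul, map_sum, hCoordLinearMap_apply, smul_eq_mul]
      using congrArg (hCoordLinearMap d) hxy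
  have : 0 < γ⁻¹ * ∑ i, w i * hCoord (r i) := by linarith
  calc 0 < γ ^ 2 * (γ⁻¹ * ∑ i, w i * hCoord (r i)) := by positivity
    _ = _ := by field_simp

variable {p : EuclideanSpace ℝ (Fin d)} {q : Fin d → EuclideanSpace ℝ (Fin d)} {c : Fin d → ℝ}

open Classical in
lemma HighAbove.mul_hCoord_sub_sum_pos (hAB : HighAbove A B) (hp : p ∈ A ∪ B)
    (hqAB : ∀ i, q i ∈ A ∪ B) (hq : Function.Injective q) (hpq : ∀ i, p ≠ q i)
    (hc1 : ∑ i, c i = 1) (hpc : proj p = ∑ i, c i • proj (q i))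
    (hγ : (if p ∈ A then 1 else 0) - ∑ i with q i ∈ A, c i ≠ 0) :
    0 < ((if p ∈ A then 1 else 0) - ∑ i with q i ∈ A, c i) *
      (hCoord p - ∑ i, c i * hCoord (q i)) := by
  have hsumA : ∑ i with (Fin.cons p q : Fin (d + 1) → _) i ∈ A,
      (Fin.cons 1 (-c) : Fin (d + 1) → ℝ) i = (if p ∈ A then 1 else 0) - ∑ i with q i ∈ A, c i := by
    simp only [sum_filter, Fin.sum_univ_succ, Fin.cons_zero, Fin.cons_succ, Pi.neg_apply]
    rw [sub_eq_add_neg, ← sum_neg_distrib]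
    congr 1
    exact sum_congr rfl fun i _ => by split_ifs <;> simp
  have key := hAB.mul_sum_hCoord_pos (r := Fin.cons p q) (w := Fin.cons 1 (-c))
    (by simp) (Fin.cons_injective_iff.2 ⟨fun ⟨i, hi⟩ => hpq i hi.symm, hq⟩)
    (Fin.cases hp hqAB) (by simp [Fin.sum_univ_succ, hc1])
    (by simp [Fin.sum_univ_succ, hpc]) (hsumA ▸ hγ)
  rw [hsumA] at key
  convert key using 2
  simp [Fin.sum_univ_succ, sub_eq_add_neg]

lemma HighAbove.sum_lt_hCoord (hAB : HighAbove A B) (hp : p ∈ A)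
    (hqAB : ∀ i, q i ∈ A ∪ B) (hqB : ∃ i, q i ∈ B) (hq : Function.Injective q)
    (hpq : ∀ i, p ≠ q i) (hc : ∀ i, 0 < c i) (hc1 : ∑ i, c i = 1)
    (hpc : proj p = ∑ i, c i • proj (q i)) :
    ∑ i, c i * hCoord (q i) < hCoord p := by
  classical
  obtain ⟨i₀, hi₀⟩ := hqB
  have hγ : 0 < (if p ∈ A then 1 else 0) - ∑ i with q i ∈ A, c i := by
    rw [if_pos hp, ← hc1, ← sum_filter_add_sum_filter_not univ (q · ∈ A), add_sub_cancel_left]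
    exact sum_pos (fun i _ => hc i)
      ⟨i₀, mem_filter.2 ⟨mem_univ _, Set.disjoint_right.1 hAB.1 hi₀⟩⟩
  have := hAB.mul_hCoord_sub_sum_pos (Or.inl hp) hqAB hq hpq hc1 hpc hγ.ne'
  linarith [(pos_iff_pos_of_mul_pos this).1 hγ]

lemma HighAbove.hCoord_lt_sum (hAB : HighAbove A B) (hp : p ∈ B)
    (hqAB : ∀ i, q i ∈ A ∪ B) (hqA : ∃ i, q i ∈ A) (hq : Function.Injective q)
    (hpq : ∀ i, p ≠ q i) (hc : ∀ i, 0 < c i) (hc1 : ∑ i, c i = 1)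
    (hpc : proj p = ∑ i, c i • proj (q i)) :
    hCoord p < ∑ i, c i * hCoord (q i) := by
  classical
  obtain ⟨i₀, hi₀⟩ := hqA
  have hγ : (if p ∈ A then 1 else 0) - ∑ i with q i ∈ A, c i < 0 := by
    rw [if_neg (Set.disjoint_right.1 hAB.1 hp), zero_sub, neg_neg_iff_pos]
    exact sum_pos (fun i _ => hc i) ⟨i₀, mem_filter.2 ⟨mem_univ _, hi₀⟩⟩
  have := hAB.mul_hCoord_sub_sum_pos (Or.inr hp) hqAB hq hpq hc1 hpc hγ.ne
  linarith [(neg_iff_neg_of_mul_pos this).1 hγ]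

end HighAbove

section PosCombination

variable {V : Type*} [AddCommGroup V] [Module ℝ V]

def IsPosCombination (t : Finset V) (x : V) : Prop :=
  ∃ w : V → ℝ, (∀ f ∈ t, 0 < w f) ∧ ∑ f ∈ t, w f = 1 ∧ ∑ f ∈ t, w f • f = x

lemma isPosCombination_filter_pos {t : Finset V} {x : V} {w : V → ℝ} (hw0 : ∀ f ∈ t, 0 ≤ w f)
    (hw1 : ∑ f ∈ t, w f = 1) (hwx : ∑ f ∈ t, w f • f = x) :
    IsPosCombination (t.filter (0 < w ·)) x := by
  refine ⟨w, fun f hf => (mem_filter.1 hf).2, ?_, ?_⟩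
  · rwa [sum_filter_of_ne fun f hf hne => (hw0 f hf).lt_of_ne' hne]
  · rwa [sum_filter_of_ne fun f hf hne => (hw0 f hf).lt_of_ne' (left_ne_zero_of_smul hne)]

lemma exists_affine_relation_nonpos_at {t : Finset V} (ht : ¬ AffineIndependent ℝ ((↑) : t → V))
    {r : V} (hr : r ∈ t) :
    ∃ g : V → ℝ, ∑ f ∈ t, g f • f = 0 ∧ ∑ f ∈ t, g f = 0 ∧ g r ≤ 0 ∧ ∃ f ∈ t, 0 < g f := by
  obtain ⟨g, hgx, hg1, f₁, hf₁, hgf₁⟩ := exists_nontrivial_relation_sum_zero_of_not_affine_ind ht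
  rcases le_or_gt (g r) 0 with hgr | hgr
  · exact ⟨g, hgx, hg1, hgr, exists_pos_of_sum_zero_of_exists_nonzero g hg1 ⟨f₁, hf₁, hgf₁⟩⟩
  · refine ⟨-g, by simp [neg_smul, hgx], by simp [hg1], by simpa using hgr.le,
      exists_pos_of_sum_zero_of_exists_nonzero (-g) (by simp [hg1]) ⟨r, hr, by simpa using hgr.ne'⟩⟩

lemma IsPosCombination.exists_ssubset {t : Finset V} {x r : V} (h : IsPosCombination t x)
    (hr : r ∈ t) (ht : ¬ AffineIndependent ℝ ((↑) : t → V)) :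
    ∃ t' ⊂ t, r ∈ t' ∧ IsPosCombination t' x := by
  obtain ⟨w, hw0, hw1, hwx⟩ := h
  obtain ⟨g, hgx, hg1, hgr, hpos⟩ := exists_affine_relation_nonpos_at ht hr
  obtain ⟨f₀, hf₀, hmin⟩ := (t.filter (0 < g ·)).exists_min_image (fun f => w f / g f)
    (by simpa [Finset.Nonempty] using hpos)
  rw [mem_filter] at hf₀
  set τ := w f₀ / g f₀
  have hτ : 0 ≤ τ := div_nonneg (hw0 f₀ hf₀.1).le hf₀.2.le
  set k : V → ℝ := fun f => w f - τ * g f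
  have hk0 : ∀ f ∈ t, 0 ≤ k f := by
    intro f hf
    rcases lt_or_ge 0 (g f) with hgf | hgf
    · have := hmin f (mem_filter.2 ⟨hf, hgf⟩)
      rw [div_le_div_iff₀ hf₀.2 hgf] at this
      simp only [k, τ, sub_nonneg, div_mul_eq_mul_div, div_le_iff₀ hf₀.2]
      linarith
    · nlinarith [hw0 f hf]
  have hkf₀ : k f₀ = 0 := by simp [k, τ, hf₀.2.ne']
  have hkr : 0 < k r := by nlinarith [hw0 r hr]
  refine ⟨t.filter (0 < k ·), ?_, mem_filter.2 ⟨hr, hkr⟩, isPosCombination_filter_pos hk0 ?_ ?_⟩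
  · exact (filter_ssubset).2 ⟨f₀, hf₀.1, by simp [hkf₀]⟩
  · simp [k, sum_sub_distrib, ← mul_sum, hw1, hg1]
  · simp [k, sub_smul, sum_sub_distrib, mul_smul, ← smul_sum, hwx, hgx]

/-- Carathéodory's theorem, keeping a marked point `r` of the support. -/
theorem IsPosCombination.exists_affineIndependent {t : Finset V} {x r : V}
    (h : IsPosCombination t x) (hr : r ∈ t) :
    ∃ t' ⊆ t, r ∈ t' ∧ AffineIndependent ℝ ((↑) : t' → V) ∧ IsPosCombination t' x := by
  induction t using Finset.strongInduction with
  | H t ih =>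
    by_cases ht : AffineIndependent ℝ ((↑) : t → V)
    · exact ⟨t, subset_rfl, hr, ht, h⟩
    · obtain ⟨t', ht't, hrt', h'⟩ := h.exists_ssubset hr ht
      obtain ⟨u, hut', hru, hu, hux⟩ := ih t' ht't h' hrt'
      exact ⟨u, hut'.trans ht't.subset, hru, hu, hux⟩

lemma IsPosCombination.mem_affineSpan {t : Finset V} {x : V} (h : IsPosCombination t x) :
    x ∈ affineSpan ℝ (t : Set V) := by
  obtain ⟨w, -, hw1, rfl⟩ := h
  simpa using sum_smul_mem_affineSpan_image t id hw1

end PosCombination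

section Interior

open Topology Filter in
lemma exists_pos_add_smul_mem_of_mem_interior {V : Type*} [AddCommGroup V] [Module ℝ V]
    [TopologicalSpace V] [ContinuousAdd V] [ContinuousSMul ℝ V] {s : Set V} {a : V}
    (ha : a ∈ interior s) (v : V) :
    ∃ ε : ℝ, 0 < ε ∧ a + ε • v ∈ s := by
  have hnhds : ∀ᶠ ε in 𝓝 (0 : ℝ), a + ε • v ∈ interior s :=
    (Continuous.tendsto (by fun_prop) 0).eventually
      (by simpa using isOpen_interior.mem_nhds ha)
  obtain ⟨ε, hε, hεs⟩ := ((hnhds.filter_mono nhdsWithin_le_nhds).and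
    (self_mem_nhdsWithin (s := Set.Ioi 0))).exists
  exact ⟨ε, hεs, interior_subset hε⟩

variable {V : Type*} [NormedAddCommGroup V] [NormedSpace ℝ V] [DecidableEq V]

/-- An interior point of `conv Q` is not extreme, and by Krein–Milman the extreme points
already span `conv Q`. -/
lemma convexHull_subset_convexHull_erase_of_mem_interior [Nontrivial V] {Q : Finset V} {a : V}
    (ha : a ∈ interior (convexHull ℝ (Q : Set V))) :
    convexHull ℝ (Q : Set V) ⊆ convexHull ℝ ↑(Q.erase a) := by
  have hext : (convexHull ℝ (Q : Set V)).extremePoints ℝ ⊆ ↑(Q.erase a) := fun e he => by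
    rw [coe_erase]
    refine ⟨extremePoints_convexHull_subset he, fun hea => ?_⟩
    rw [Set.mem_singleton_iff] at hea
    subst hea
    exact Set.disjoint_left.1 (disjoint_interior_extremePoints _) ha he
  rw [← closure_convexHull_extremePoints (Q.finite_toSet.isCompact_convexHull ℝ)
    (convex_convexHull ℝ _)]
  exact closure_minimal (convexHull_mono hext) ((Q.erase a).finite_toSet.isClosed_convexHull ℝ)

theorem exists_isPosCombination_of_mem_interior {Q : Finset V} {a b : V}
    (ha : a ∈ interior (convexHull ℝ (Q : Set V))) (hb : b ∈ Q) (hab : b ≠ a) :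
    ∃ t ⊆ Q.erase a, b ∈ t ∧ IsPosCombination t a := by
  have : Nontrivial V := ⟨⟨b, a, hab⟩⟩
  obtain ⟨ε, hε, hz⟩ := exists_pos_add_smul_mem_of_mem_interior ha (a - b)
  obtain ⟨u, hu0, hu1, hu⟩ := Finset.mem_convexHull'.1
    (convexHull_subset_convexHull_erase_of_mem_interior ha hz)
  have hbQ : b ∈ Q.erase a := mem_erase.2 ⟨hab, hb⟩
  -- `a = (z + ε b) / (1 + ε)` for `z = a + ε (a - b)`
  set w : V → ℝ := fun f => (u f + if f = b then ε else 0) / (1 + ε)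
  have hwb : 0 < w b := by
    have := hu0 b hbQ
    simp only [w]
    positivity
  refine ⟨_, filter_subset (0 < w ·) _, mem_filter.2 ⟨hbQ, hwb⟩,
    isPosCombination_filter_pos (fun f hf => ?_) ?_ ?_⟩
  · have := hu0 f hf
    simp only [w]
    split_ifs <;> positivity
  · simp only [w, ← sum_div, sum_add_distrib, hu1, sum_ite_eq', if_pos hbQ]
    field_simp
  · simp only [w, div_eq_inv_mul, mul_smul, ← smul_sum, add_smul, sum_add_distrib, ite_smul,
      zero_smul, sum_ite_eq', if_pos hbQ]
    rw [hu, show a + ε • (a - b) + ε • b = (1 + ε) • a by module, smul_smul,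
      inv_mul_cancel₀ (by positivity), one_smul]

end Interior

section GeneralPosition

variable {m : ℕ} {Q t : Finset (EuclideanSpace ℝ (Fin m))} {a : EuclideanSpace ℝ (Fin m)}

lemma card_add_one_le_of_nonempty_interior
    (hQ : (interior (convexHull ℝ (Q : Set (EuclideanSpace ℝ (Fin m))))).Nonempty) :
    m + 1 ≤ Q.card := by
  have : Nonempty Q := (coe_nonempty.1 (convexHull_nonempty_iff.1
    (hQ.mono interior_subset))).coe_sort
  have hspan : vectorSpan ℝ (Set.range ((↑) : Q → EuclideanSpace ℝ (Fin m))) = ⊤ := by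
    rw [Subtype.range_val, ← direction_affineSpan, affineSpan_eq_top_of_nonempty_interior hQ,
      AffineSubspace.direction_top]
  have h := finrank_vectorSpan_range_add_one_le ℝ ((↑) : Q → EuclideanSpace ℝ (Fin m))
  rwa [hspan, finrank_top, finrank_euclideanSpace_fin, Fintype.card_coe] at h

/-- For the lower bound: in general position, `a` lies in the affine span of no `m` other points
of `Q`. -/
lemma card_eq_of_isPosCombination (hQ : AffGenPos (Q : Set (EuclideanSpace ℝ (Fin m))))
    (ha : a ∈ interior (convexHull ℝ (Q : Set _))) (haQ : a ∈ Q) (htQ : t ⊆ Q.erase a)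
    (ht : AffineIndependent ℝ ((↑) : t → EuclideanSpace ℝ (Fin m)))
    (hta : IsPosCombination t a) : t.card = m + 1 := by
  refine le_antisymm ?_ (not_lt.1 fun hlt => ?_)
  · simpa using ht.card_le_finrank_succ.trans
      (Nat.succ_le_succ (Submodule.finrank_le _))
  obtain ⟨u, hau, huQ, hu⟩ := exists_subsuperset_card_eq
    (insert_subset haQ (htQ.trans (erase_subset _ _)))
    ((card_insert_le _ _).trans hlt) (card_add_one_le_of_nonempty_interior ⟨a, ha⟩)
  have hui := hQ u (coe_subset.2 huQ) hu
  have htu : ((↑) '' {x : u | ↑x ∈ t} : Set (EuclideanSpace ℝ (Fin m))) = t := by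
    ext x
    simpa using fun hx => hau (mem_insert_of_mem hx)
  have hat := hta.mem_affineSpan
  rw [← htu] at hat
  have := (hui.mem_affineSpan_iff ⟨a, hau (mem_insert_self _ _)⟩ _).1 hat
  exact (mem_erase.1 (htQ this)).1 rfl

theorem exists_simplex_of_mem_interior (hQ : AffGenPos (Q : Set (EuclideanSpace ℝ (Fin m))))
    {b : EuclideanSpace ℝ (Fin m)} (ha : a ∈ interior (convexHull ℝ (Q : Set _))) (haQ : a ∈ Q)
    (hb : b ∈ Q) (hab : b ≠ a) :
    ∃ t ⊆ Q.erase a, b ∈ t ∧ t.card = m + 1 ∧ IsPosCombination t a := by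
  obtain ⟨t, htQ, hbt, hta⟩ := exists_isPosCombination_of_mem_interior ha hb hab
  obtain ⟨t', ht't, hbt', ht', ht'a⟩ := hta.exists_affineIndependent hbt
  exact ⟨t', ht't.trans htQ, hbt',
    card_eq_of_isPosCombination hQ ha haQ (ht't.trans htQ) ht' ht'a, ht'a⟩

end GeneralPosition

lemma Regular.exists_simplex {d : ℕ} (hd : 2 ≤ d) {P : Set (EuclideanSpace ℝ (Fin d))}
    (hP : Regular P) (hPfin : P.Finite) {p r : EuclideanSpace ℝ (Fin d)} (hp : p ∈ P) (hr : r ∈ P)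
    (hrp : r ≠ p) (hint : proj p ∈ interior (convexHull ℝ (proj '' P))) :
    ∃ (q : Fin d → EuclideanSpace ℝ (Fin d)) (c : Fin d → ℝ),
      (∀ i, q i ∈ P) ∧ (∃ i, q i = r) ∧ Function.Injective q ∧ (∀ i, p ≠ q i) ∧
      (∀ i, c i ∈ Set.Ioo (0 : ℝ) 1) ∧ ∑ i, c i = 1 ∧ proj p = ∑ i, c i • proj (q i) := by
  classical
  have hinj := proj_injOn hd hP
  set Q := (hPfin.image proj).toFinset
  have hQ : (Q : Set _) = proj '' P := Set.Finite.coe_toFinset _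
  obtain ⟨t, htQ, hrt, htcard, w, hw0, hw1, hwp⟩ := exists_simplex_of_mem_interior (hQ ▸ hP.2.1)
    (hQ ▸ hint) (by simpa [Q] using ⟨p, hp, rfl⟩) (by simpa [Q] using ⟨r, hr, rfl⟩)
    (fun h => hrp (hinj hr hp h))
  let e : Fin d ≃ t := (t.equivFin.trans (finCongr (by omega))).symm
  have hteP : ∀ i, ↑(e i) ∈ proj '' P := fun i => hQ ▸ mem_of_mem_erase (htQ (e i).2)
  set q : Fin d → EuclideanSpace ℝ (Fin d) := fun i => Function.invFunOn proj P (e i)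
  have hqP : ∀ i, q i ∈ P := fun i => Function.invFunOn_mem (hteP i)
  have hqproj : ∀ i, proj (q i) = e i := fun i => Function.invFunOn_eq (hteP i)
  refine ⟨q, fun i => w (e i), hqP, ⟨e.symm ⟨proj r, hrt⟩, hinj (hqP _) hr (by simp [hqproj])⟩,
    fun i j hij => e.injective (Subtype.ext (by simpa [hqproj] using congrArg proj hij)),
    fun i hpi => (mem_erase.1 (htQ (e i).2)).1 (by rw [← hqproj, hpi]),
    fun i => ⟨hw0 _ (e i).2, ?_⟩, ?_, ?_⟩
  · obtain ⟨f, hf, hfi⟩ := exists_mem_ne (s := t) (by omega) (e i)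
    rw [← hw1]
    exact single_lt_sum hfi (e i).2 hf (hw0 f hf) fun k hk _ => (hw0 k hk).le
  · rw [e.sum_comp (fun f => w f), sum_coe_sort t w, hw1]
  · simp only [hqproj]
    rw [e.sum_comp (fun f => w f • (f : EuclideanSpace ℝ (Fin (d - 1)))),
      sum_coe_sort t (fun f => w f • f), hwp]

theorem stmt8 (d : ℕ) (hd : 2 ≤ d) (A B : Set (EuclideanSpace ℝ (Fin d)))
    (hAfin : A.Finite) (hBfin : B.Finite) (hAB : HighAbove A B)
    (P : Set (EuclideanSpace ℝ (Fin d))) (hP : P ⊆ A ∪ B)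
    (hcupcap : ConvexCup P ∨ ConvexCap P) :
    P \ piBoundary P ⊆ A ∨ P \ piBoundary P ⊆ B := by
  by_contra! h
  obtain ⟨⟨x, ⟨hxP, hxint⟩, hxA⟩, ⟨y, ⟨hyP, hyint⟩, hyB⟩⟩ :=
    And.imp Set.not_subset.1 Set.not_subset.1 h
  simp only [piBoundary, Set.mem_ofPred_eq, not_and, not_not] at hxint hyint
  have hxB : x ∈ B := (hP hxP).resolve_left hxA
  have hyA : y ∈ A := (hP hyP).resolve_right hyB
  have hxy : x ≠ y := fun h => Set.disjoint_left.1 hAB.1 hyA (h ▸ hxB)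
  have hPfin : P.Finite := (hAfin.union hBfin).subset hP
  rcases hcupcap with hcup | hcap
  · obtain ⟨q, c, hqP, ⟨i, rfl⟩, hq, hyq, hc, hc1, hyc⟩ :=
      hcup.1.exists_simplex hd hPfin hyP hxP hxy (hyint hyP)
    exact (hcup.2 y q c hyP hqP hq hyq hc hc1 hyc).not_gt (hAB.sum_lt_hCoord hyA
      (fun j => hP (hqP j)) ⟨i, hxB⟩ hq hyq (fun j => (hc j).1) hc1 hyc)
  · obtain ⟨q, c, hqP, ⟨i, rfl⟩, hq, hxq, hc, hc1, hxc⟩ :=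
      hcap.1.exists_simplex hd hPfin hxP hyP hxy.symm (hxint hxP)
    exact (hcap.2 x q c hxP hqP hq hxq hc hc1 hxc).not_gt (hAB.hCoord_lt_sum hxB
      (fun j => hP (hqP j)) ⟨i, hyA⟩ hq hxq (fun j => (hc j).1) hc1 hxc)
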